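/- Let K be a field of characteristic 0 and f a bihomogeneous form on K^r × K^r of bidegree (a, b), both positive, given by f(α, β) = Σ_{i=1}^r c_i α_i^a β_i^b with all c_i ≠ 0. Then f has strength at least (r−1)/2. -/

import Mathlib

open MvPolynomial

/-- `f` admits a decomposition `f = ∑_{i<s} g i * h i` with `g i, h i` homogeneous of
degrees strictly between `0` and `d`. -/
def HasStrengthDecomp {K : Type*} [CommRing K] {σ : Type*} (d : ℕ)
    (f : MvPolynomial σ K) (s : ℕ) : Prop :=
  ∃ (g h : Fin s → MvPolynomial σ K) (e : Fin s → ℕ),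
    (∀ i, 0 < e i ∧ e i < d ∧ (g i).IsHomogeneous (e i) ∧ (h i).IsHomogeneous (d - e i)) ∧
    f = ∑ i, g i * h i

/-- The strength of a degree-`d` form, valued in `ℕ∞`. -/
noncomputable def strength {K : Type*} [CommRing K] {σ : Type*} (d : ℕ)
    (f : MvPolynomial σ K) : ℕ∞ :=
  sInf {s : ℕ∞ | ∃ k : ℕ, s = (k : ℕ∞) ∧ HasStrengthDecomp d f k}

/-!
If `f = ∑_{j<k} g_j h_j` with all `g_j, h_j` of positive degree, then `f` lies in `I²` for the
ideal `I = (g_j, h_j)`, so every partial derivative of `f` lies in `I`. Since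
`∂f/∂α_i = a c_i α_i^(a-1) β_i^b` with `a c_i` a unit, specialising `α = β = x` puts a power of
each `x_i` into an ideal of `K[x_1, …, x_r]` generated by `2k` polynomials without constant term.
The ideal `(x_1, …, x_r)`, of height `r`, is then a minimal prime over that ideal, and Krull's
height theorem gives `r ≤ 2k`.
-/

theorem Derivation.apply_mem_of_mem_sq {R A : Type*} [CommRing R] [CommRing A] [Algebra R A]
    (D : Derivation R A A) {I : Ideal A} {x : A} (hx : x ∈ I ^ 2) : D x ∈ I := by
  rw [pow_two] at hx
  refine Submodule.mul_induction_on hx (fun y hy z hz => ?_) (fun y z hy hz => ?_)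
  · rw [D.leibniz]
    exact I.add_mem (I.mul_mem_right _ hy) (I.mul_mem_right _ hz)
  · rw [map_add]
    exact I.add_mem hy hz

namespace MvPolynomial

theorem pderiv_inl_sum_C_mul_X_pow_mul_X_pow {R ι : Type*} [CommSemiring R] [Fintype ι]
    (c : ι → R) (a b : ℕ) (i : ι) :
    pderiv (Sum.inl i) (∑ j, C (c j) * X (Sum.inl j) ^ a * X (Sum.inr j) ^ b :
        MvPolynomial (ι ⊕ ι) R) =
      C (c i * a) * (X (Sum.inl i) ^ (a - 1) * X (Sum.inr i) ^ b) := by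
  classical
  simp [pderiv_X, Pi.single_apply]
  ring

lemma ker_constantCoeff_le_of_forall_X_mem {R σ : Type*} [CommSemiring R] {q : Ideal (MvPolynomial σ R)}
    (hX : ∀ i, X i ∈ q) : RingHom.ker (constantCoeff : MvPolynomial σ R →+* R) ≤ q := by
  intro p hp
  have hspan : p ∈ Ideal.span (X '' Set.univ) := by
    refine mem_ideal_span_X_image.mpr fun m hm => ?_
    have hm0 : m ≠ 0 := by
      rintro rfl
      exact mem_support_iff.mp hm hp
    obtain ⟨i, hi⟩ := Finsupp.ne_iff.mp hm0
    exact ⟨i, Set.mem_univ i, hi⟩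
  exact Ideal.span_le.mpr (by rintro _ ⟨i, -, rfl⟩; exact hX i) hspan

section Field

variable {K : Type*} [Field K]

lemma isMaximal_ker_constantCoeff (σ : Type*) :
    (RingHom.ker (constantCoeff : MvPolynomial σ K →+* K)).IsMaximal :=
  RingHom.ker_isMaximal_of_surjective _ fun x => ⟨C x, constantCoeff_C σ x⟩

theorem height_ker_constantCoeff (σ : Type*) [Finite σ] :
    (RingHom.ker (constantCoeff : MvPolynomial σ K →+* K)).height = Nat.card σ := by
  induction σ using Finite.induction_empty_option with
  | of_equiv e H =>
    rw [← Nat.card_congr e, ← H, ← (renameEquiv K e).toRingEquiv.height_comap, ← Ideal.comap_coe,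
      RingHom.comap_ker]
    congr 2
    ext <;> simp
  | h_empty =>
    rw [Nat.card_of_isEmpty, Nat.cast_zero, Ideal.height_eq_zero_iff_eq_bot,
      ← RingHom.injective_iff_ker_eq_bot]
    intro p q h
    rw [eq_C_of_isEmpty p, eq_C_of_isEmpty q]
    exact congrArg C h
  | @h_option S _ IH =>
    -- View `K[X_none, X_s]` as `K[X_s][X_none]`: a maximal ideal of `A[X]` has height one more
    -- than the prime of `A` below it.
    set E := (optionEquivLeft K S).toRingEquiv
    have := isMaximal_ker_constantCoeff (K := K) (Option S)
    have : (Ideal.map E (RingHom.ker constantCoeff)).IsMaximal := Ideal.map_isMaximal_of_equiv E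
    have : (Ideal.map E (RingHom.ker constantCoeff)).LiesOver
        (RingHom.ker (constantCoeff : MvPolynomial S K →+* K)) := by
      constructor
      rw [Ideal.under, ← Ideal.comap_symm, ← Ideal.comap_coe E.symm, Ideal.comap_comap,
        RingHom.comap_ker]
      congr 1
      ext <;> simp [E]
    rw [← E.height_map, Polynomial.height_eq_height_add_one
      (RingHom.ker (constantCoeff : MvPolynomial S K →+* K)), IH]
    simp

theorem card_le_of_X_pow_mem_span {σ J : Type*} [Fintype σ] [Fintype J]
    (P : J → MvPolynomial σ K) (hP : ∀ j, constantCoeff (P j) = 0)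
    (hX : ∀ i, ∃ n, X i ^ n ∈ Ideal.span (Set.range P)) :
    Fintype.card σ ≤ Fintype.card J := by
  classical
  have hspan : Ideal.span (Set.range P) = Ideal.span ↑(Finset.univ.image P) := by simp
  have hmin : RingHom.ker (constantCoeff : MvPolynomial σ K →+* K) ∈
      (Ideal.span ↑(Finset.univ.image P)).minimalPrimes := by
    rw [← hspan]
    refine ⟨⟨(isMaximal_ker_constantCoeff σ).isPrime, ?_⟩, fun q ⟨hq, hPq⟩ _ => ?_⟩
    · exact Ideal.span_le.mpr (by rintro _ ⟨j, rfl⟩; exact hP j)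
    · exact ker_constantCoeff_le_of_forall_X_mem fun i =>
        have ⟨n, hn⟩ := hX i
        hq.mem_of_pow_mem n (hPq hn)
  have hheight := (height_ker_constantCoeff (K := K) σ).symm.trans_le
    (Ideal.height_le_card_of_mem_minimalPrimes_span_finset hmin)
  rw [Nat.card_eq_fintype_card] at hheight
  exact (Nat.cast_le.mp hheight).trans Finset.card_image_le

end Field

end MvPolynomial

theorem card_le_two_mul_of_hasStrengthDecomp {K ι : Type*} [Field K] [CharZero K] [Fintype ι]
    {a b : ℕ} (ha : 0 < a) {c : ι → K} (hc : ∀ i, c i ≠ 0) {k : ℕ}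
    (hk : HasStrengthDecomp (a + b)
      (∑ i, C (c i) * X (Sum.inl i) ^ a * X (Sum.inr i) ^ b : MvPolynomial (ι ⊕ ι) K) k) :
    Fintype.card ι ≤ 2 * k := by
  obtain ⟨g, h, e, hgh, hf⟩ := hk
  set Q : Fin k ⊕ Fin k → MvPolynomial (ι ⊕ ι) K := Sum.elim g h
  set I := Ideal.span (Set.range Q)
  have hfI : (∑ i, C (c i) * X (Sum.inl i) ^ a * X (Sum.inr i) ^ b) ∈ I ^ 2 := by
    rw [hf, pow_two]
    exact sum_mem fun j _ => Ideal.mul_mem_mul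
      (Ideal.subset_span ⟨Sum.inl j, rfl⟩) (Ideal.subset_span ⟨Sum.inr j, rfl⟩)
  have hmon : ∀ i, X (Sum.inl i) ^ (a - 1) * X (Sum.inr i) ^ b ∈ I := fun i => by
    have := (pderiv (Sum.inl i)).apply_mem_of_mem_sq hfI
    rwa [pderiv_inl_sum_C_mul_X_pow_mul_X_pow, Ideal.unit_mul_mem_iff_mem] at this
    exact (isUnit_iff_ne_zero.mpr (mul_ne_zero (hc i) (Nat.cast_ne_zero.mpr ha.ne'))).map C
  have hQ : ∀ j, constantCoeff (Q j) = 0 := by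
    rintro (j | j)
    · exact (hgh j).2.2.1.coeff_eq_zero (by simpa using (hgh j).1.ne)
    · exact (hgh j).2.2.2.coeff_eq_zero (by simpa using (Nat.sub_pos_of_lt (hgh j).2.1).ne)
  set π : ι ⊕ ι → ι := Sum.elim id id
  calc Fintype.card ι ≤ Fintype.card (Fin k ⊕ Fin k) := by
        refine card_le_of_X_pow_mem_span (rename π ∘ Q) (fun j => ?_) (fun i => ⟨a - 1 + b, ?_⟩)
        · rw [Function.comp_apply, constantCoeff_rename, hQ]
        · have := Ideal.mem_map_of_mem (rename π) (hmon i)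
          rw [Ideal.map_span, ← Set.range_comp] at this
          simpa [π, pow_add] using this
    _ = 2 * k := by simp [two_mul]

theorem le_two_mul_strength {K σ : Type*} [CommRing K] {d n : ℕ} {f : MvPolynomial σ K}
    (h : ∀ k, HasStrengthDecomp d f k → n ≤ 2 * k) :
    (n : ℕ∞) ≤ 2 * strength d f := by
  rcases Set.eq_empty_or_nonempty
    {s : ℕ∞ | ∃ k : ℕ, s = (k : ℕ∞) ∧ HasStrengthDecomp d f k} with hempty | hne
  · simp [strength, hempty]
  · obtain ⟨k, hk, hdecomp⟩ := csInf_mem hne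
    rw [strength, hk]
    exact_mod_cast h k hdecomp

theorem stmt15_general {K : Type*} [Field K] [CharZero K] (r a b : ℕ) (ha : 0 < a)
    (c : Fin r → K) (hc : ∀ i, c i ≠ 0) :
    ((r - 1 : ℕ) : ℕ∞) ≤ 2 * strength (a + b)
      (∑ i : Fin r, MvPolynomial.C (c i) *
        MvPolynomial.X (Sum.inl i) ^ a * MvPolynomial.X (Sum.inr i) ^ b :
        MvPolynomial (Fin r ⊕ Fin r) K) := by
  refine le_two_mul_strength fun k hk => ?_
  have hr := card_le_two_mul_of_hasStrengthDecomp ha hc hk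
  rw [Fintype.card_fin] at hr
  omega

/-- The bihomogeneous form `f(α, β) = ∑ c_i α_i^a β_i^b` on `K^r × K^r` with `a, b > 0` and
all `c_i ≠ 0` has strength at least `(r-1)/2`, i.e. `r - 1 ≤ 2 ⋅ str(f)`. -/
theorem stmt15 {K : Type*} [Field K] [CharZero K] (r a b : ℕ) (ha : 0 < a) (hb : 0 < b)
    (c : Fin r → K) (hc : ∀ i, c i ≠ 0) :
    ((r - 1 : ℕ) : ℕ∞) ≤ 2 * strength (a + b)
      (∑ i : Fin r, MvPolynomial.C (c i) *
        MvPolynomial.X (Sum.inl i) ^ a * MvPolynomial.X (Sum.inr i) ^ b :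
        MvPolynomial (Fin r ⊕ Fin r) K) :=
  stmt15_general r a b ha c hc
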